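/- arXiv:1401.4082 — 4 statements merged into one kernel-verified Lean document; each statement's English description precedes it below -/
import Mathlib

section
/- Price's theorem (1D case): Let f : ℝ → ℝ be twice continuously differentiable with f, f', f'' of at most polynomial growth. Then the derivative with respect to the variance v > 0 of the expectation of f under a Gaussian N(0, v) equals one half the expectation of the second derivative: ∂/∂v ∫ f(ξ) N(ξ|0,v) dξ = (1/2) ∫ f''(ξ) N(ξ|0,v) dξ. -/
/-!
The density `N(x | 0, v)` solves the heat equation `∂ᵥ N = ½ ∂ₓ² N`. On `v / 2 ≤ w ≤ 2 v`
the derivative `∂_w N(x | 0, w)` is dominated by a polynomial times `N(x | 0, 2 v)`, so one may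
differentiate under the integral sign; integrating by parts twice then moves both
`x`-derivatives onto `f`. Polynomial growth makes every product with a Gaussian integrable,
which is all that integration by parts on the whole line needs.
-/

open MeasureTheory Real

/-- Centered one-dimensional Gaussian density `N(ξ | 0, v)` with variance `v`. -/
noncomputable def gaussDensityVar (v x : ℝ) : ℝ :=
  (1 / Real.sqrt (2 * Real.pi * v)) * Real.exp (-(x ^ 2) / (2 * v))

/-- At most polynomial growth. -/
def PolyGrowth (f : ℝ → ℝ) : Prop :=
  ∃ C : ℝ, ∃ n : ℕ, ∀ x, |f x| ≤ C * (1 + |x|) ^ n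

open Set Filter Polynomial

namespace PolyGrowth

variable {f g : ℝ → ℝ}

lemma exists_nonneg (hf : PolyGrowth f) :
    ∃ C, 0 ≤ C ∧ ∃ n : ℕ, ∀ x, |f x| ≤ C * (1 + |x|) ^ n := by
  obtain ⟨C, n, hC⟩ := hf
  exact ⟨|C|, abs_nonneg C, n, fun x => (hC x).trans (by gcongr; exact le_abs_self C)⟩

lemma abs (hf : PolyGrowth f) : PolyGrowth fun x => |f x| := by
  simpa only [PolyGrowth, abs_abs] using hf

lemma add (hf : PolyGrowth f) (hg : PolyGrowth g) : PolyGrowth fun x => f x + g x := by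
  obtain ⟨C, hC, n, hf⟩ := hf.exists_nonneg
  obtain ⟨D, hD, m, hg⟩ := hg.exists_nonneg
  refine ⟨C + D, n + m, fun x => ?_⟩
  have h1 : 1 ≤ 1 + |x| := le_add_of_nonneg_right (abs_nonneg x)
  calc |f x + g x| ≤ C * (1 + |x|) ^ n + D * (1 + |x|) ^ m :=
        (abs_add_le _ _).trans (add_le_add (hf x) (hg x))
    _ ≤ C * (1 + |x|) ^ (n + m) + D * (1 + |x|) ^ (n + m) := by
        gcongr <;> first | exact h1 | omega
    _ = (C + D) * (1 + |x|) ^ (n + m) := by ring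

lemma mul (hf : PolyGrowth f) (hg : PolyGrowth g) : PolyGrowth fun x => f x * g x := by
  obtain ⟨C, hC, n, hf⟩ := hf.exists_nonneg
  obtain ⟨D, hD, m, hg⟩ := hg.exists_nonneg
  refine ⟨C * D, n + m, fun x => ?_⟩
  calc |f x * g x| = |f x| * |g x| := abs_mul _ _
    _ ≤ (C * (1 + |x|) ^ n) * (D * (1 + |x|) ^ m) :=
        mul_le_mul (hf x) (hg x) (abs_nonneg _) (by positivity)
    _ = C * D * (1 + |x|) ^ (n + m) := by ring

end PolyGrowth

lemma Polynomial.polyGrowth_eval (p : ℝ[X]) : PolyGrowth fun x => p.eval x := by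
  induction p using Polynomial.induction_on' with
  | add p q hp hq => simpa only [eval_add] using hp.add hq
  | monomial n a =>
    refine ⟨|a|, n, fun x => ?_⟩
    simp only [eval_monomial, abs_mul, abs_pow]
    gcongr
    exact le_add_of_nonneg_left zero_le_one

lemma polyGrowth_neg_div (v : ℝ) : PolyGrowth fun x => -(x / v) := by
  convert (-C v⁻¹ * X).polyGrowth_eval using 2 with x
  simp only [eval_neg, eval_mul, eval_C, eval_X]
  ring

lemma polyGrowth_sq_div_sq_sub_one_div (v : ℝ) : PolyGrowth fun x => x ^ 2 / v ^ 2 - 1 / v := by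
  convert (C (v ^ 2)⁻¹ * X ^ 2 - C v⁻¹).polyGrowth_eval using 2 with x
  simp only [eval_sub, eval_mul, eval_C, eval_pow, eval_X]
  ring

lemma polyGrowth_sq_div_sq_add_one_div (v : ℝ) : PolyGrowth fun x => x ^ 2 / v ^ 2 + 1 / v := by
  convert (C (v ^ 2)⁻¹ * X ^ 2 + C v⁻¹).polyGrowth_eval using 2 with x
  simp only [eval_add, eval_mul, eval_C, eval_pow, eval_X]
  ring

lemma one_add_abs_pow_le (x : ℝ) (n : ℕ) : (1 + |x|) ^ n ≤ 2 ^ n * (1 + x ^ (2 * n)) := by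
  have hx2n : 0 ≤ x ^ (2 * n) := (even_two_mul n).pow_nonneg x
  rcases le_total |x| 1 with hx | hx
  · calc (1 + |x|) ^ n ≤ 2 ^ n := pow_le_pow_left₀ (by positivity) (by linarith) n
      _ ≤ 2 ^ n * (1 + x ^ (2 * n)) := le_mul_of_one_le_right (by positivity) (by linarith)
  · calc (1 + |x|) ^ n ≤ (2 * |x|) ^ n := pow_le_pow_left₀ (by positivity) (by linarith) n
      _ = 2 ^ n * |x| ^ n := mul_pow _ _ _
      _ ≤ 2 ^ n * |x| ^ (2 * n) := by gcongr; omega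
      _ ≤ 2 ^ n * (1 + x ^ (2 * n)) := by
          rw [pow_abs, abs_of_nonneg hx2n]; gcongr; linarith

lemma integrable_one_add_abs_pow_mul_exp_neg_mul_sq {b : ℝ} (hb : 0 < b) (n : ℕ) :
    Integrable fun x : ℝ => (1 + |x|) ^ n * exp (-b * x ^ 2) := by
  have hpow : Integrable fun x : ℝ => x ^ (2 * n) * exp (-b * x ^ 2) := by
    simpa only [rpow_natCast] using integrable_rpow_mul_exp_neg_mul_sq hb
      (s := (2 * n : ℕ)) (by linarith [(2 * n : ℕ).cast_nonneg (α := ℝ)])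
  refine (((integrable_exp_neg_mul_sq hb).add hpow).const_mul (2 ^ n)).mono'
    (by fun_prop) (Eventually.of_forall fun x => ?_)
  rw [norm_of_nonneg (by positivity)]
  calc (1 + |x|) ^ n * exp (-b * x ^ 2) ≤ 2 ^ n * (1 + x ^ (2 * n)) * exp (-b * x ^ 2) := by
        gcongr; exact one_add_abs_pow_le x n
    _ = 2 ^ n * (exp (-b * x ^ 2) + x ^ (2 * n) * exp (-b * x ^ 2)) := by ring

lemma PolyGrowth.integrable_mul_exp_neg_mul_sq {g : ℝ → ℝ} (hg : PolyGrowth g)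
    (hgm : AEStronglyMeasurable g) {b : ℝ} (hb : 0 < b) :
    Integrable fun x => g x * exp (-b * x ^ 2) := by
  obtain ⟨C, -, n, hC⟩ := hg.exists_nonneg
  refine ((integrable_one_add_abs_pow_mul_exp_neg_mul_sq hb n).const_mul C).mono'
    (hgm.mul (by fun_prop)) (Eventually.of_forall fun x => ?_)
  rw [norm_mul, norm_of_nonneg (exp_pos _).le, ← mul_assoc]
  exact mul_le_mul_of_nonneg_right (hC x) (exp_pos _).le

section GaussianDensity

lemma gaussDensityVar_eq (v x : ℝ) :
    gaussDensityVar v x = (√(2 * π * v))⁻¹ * exp (-(2 * v)⁻¹ * x ^ 2) := by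
  rw [gaussDensityVar, one_div]; ring_nf

@[fun_prop]
lemma continuous_gaussDensityVar (v : ℝ) : Continuous (gaussDensityVar v) := by
  unfold gaussDensityVar; fun_prop

lemma gaussDensityVar_pos {v : ℝ} (hv : 0 < v) (x : ℝ) : 0 < gaussDensityVar v x := by
  unfold gaussDensityVar; positivity

lemma hasDerivAt_gaussDensityVar (v x : ℝ) :
    HasDerivAt (gaussDensityVar v) (-(x / v) * gaussDensityVar v x) x := by
  refine (((hasDerivAt_pow 2 x).fun_neg.div_const (2 * v)).exp.const_mul
    (1 / √(2 * π * v))).congr_deriv ?_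
  unfold gaussDensityVar
  ring

lemma hasDerivAt_neg_div_mul_gaussDensityVar (v x : ℝ) :
    HasDerivAt (fun y => -(y / v) * gaussDensityVar v y)
      ((x ^ 2 / v ^ 2 - 1 / v) * gaussDensityVar v x) x := by
  refine (((hasDerivAt_id' x).div_const v).fun_neg.fun_mul
    (hasDerivAt_gaussDensityVar v x)).congr_deriv ?_
  ring

lemma hasDerivAt_gaussDensityVar_variance (x : ℝ) {w : ℝ} (hw : 0 < w) :
    HasDerivAt (fun u => gaussDensityVar u x)
      ((x ^ 2 / w ^ 2 - 1 / w) / 2 * gaussDensityVar w x) w := by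
  have hs : HasDerivAt (fun u => √(2 * π * u)) (π / √(2 * π * w)) w := by
    convert ((hasDerivAt_id' w).const_mul (2 * π)).sqrt (by positivity) using 1
    field_simp
  have he : HasDerivAt (fun u => -x ^ 2 / (2 * u)) (x ^ 2 / (2 * w ^ 2)) w := by
    have hfun : (fun u => -x ^ 2 / (2 * u)) = fun u => -x ^ 2 / 2 * u⁻¹ := by
      ext u; ring
    rw [hfun]
    exact ((hasDerivAt_inv hw.ne').const_mul _).congr_deriv (by ring)
  have hsq : √(2 * π * w) ^ 2 = 2 * π * w := sq_sqrt (by positivity)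
  have hs0 : √(2 * π * w) ≠ 0 := by positivity
  simp only [gaussDensityVar, one_div]
  refine ((hs.fun_inv hs0).fun_mul he.exp).congr_deriv ?_
  set s := √(2 * π * w)
  field_simp
  linear_combination w * hsq

lemma gaussDensityVar_le_of_mem_Icc {a b w : ℝ} (ha : 0 < a) (hw : w ∈ Icc a b) (x : ℝ) :
    gaussDensityVar w x ≤ √(b / a) * gaussDensityVar b x := by
  obtain ⟨haw, hwb⟩ := hw
  have hw : 0 < w := ha.trans_le haw
  have hb : 0 < b := hw.trans_le hwb
  have hconst : √(b / a) * √(2 * π * a) = √(2 * π * b) := by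
    rw [← sqrt_mul (by positivity)]
    congr 1
    field_simp
  have hexp : exp (-x ^ 2 / (2 * w)) ≤ exp (-x ^ 2 / (2 * b)) := by
    rw [neg_div, neg_div, exp_le_exp, neg_le_neg_iff]
    gcongr
  calc gaussDensityVar w x ≤ 1 / √(2 * π * a) * exp (-x ^ 2 / (2 * b)) := by
        unfold gaussDensityVar
        gcongr
    _ = √(b / a) * gaussDensityVar b x := by
        have hsqrt : 0 < √(b / a) := by positivity
        rw [gaussDensityVar, ← hconst]
        field_simp

lemma abs_variance_deriv_gaussDensityVar_le {a b w : ℝ} (ha : 0 < a) (hw : w ∈ Icc a b)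
    (x : ℝ) :
    |(x ^ 2 / w ^ 2 - 1 / w) / 2 * gaussDensityVar w x| ≤
      (x ^ 2 / a ^ 2 + 1 / a) * (√(b / a) * gaussDensityVar b x) := by
  have hw0 : 0 < w := ha.trans_le hw.1
  have hfactor : |(x ^ 2 / w ^ 2 - 1 / w) / 2| ≤ x ^ 2 / a ^ 2 + 1 / a := by
    have h1 : x ^ 2 / w ^ 2 ≤ x ^ 2 / a ^ 2 := by gcongr; exact hw.1
    have h2 : 1 / w ≤ 1 / a := by gcongr; exact hw.1
    rw [abs_le]
    constructor <;> nlinarith [div_nonneg (sq_nonneg x) (sq_nonneg w), one_div_pos.mpr hw0]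
  rw [abs_mul, abs_of_pos (gaussDensityVar_pos hw0 x)]
  exact mul_le_mul hfactor (gaussDensityVar_le_of_mem_Icc ha hw x)
    (gaussDensityVar_pos hw0 x).le (by positivity)

end GaussianDensity

section Integrals

variable {g g' : ℝ → ℝ} {v : ℝ}

lemma PolyGrowth.integrable_mul_gaussDensityVar (hg : PolyGrowth g)
    (hgm : AEStronglyMeasurable g) (hv : 0 < v) :
    Integrable fun x => g x * gaussDensityVar v x := by
  simp_rw [gaussDensityVar_eq, mul_left_comm (g _)]
  exact (hg.integrable_mul_exp_neg_mul_sq hgm (by positivity)).const_mul _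

lemma PolyGrowth.integrable_mul_mul_gaussDensityVar {p : ℝ → ℝ} (hg : PolyGrowth g)
    (hgm : AEStronglyMeasurable g) (hp : PolyGrowth p) (hpc : Continuous p) (hv : 0 < v) :
    Integrable fun x => g x * (p x * gaussDensityVar v x) := by
  simpa only [mul_assoc] using
    (hg.mul hp).integrable_mul_gaussDensityVar (hgm.mul hpc.aestronglyMeasurable) hv

lemma PolyGrowth.hasDerivAt_integral_mul_gaussDensityVar (hg : PolyGrowth g)
    (hgm : AEStronglyMeasurable g) (hv : 0 < v) :
    HasDerivAt (fun w => ∫ x, g x * gaussDensityVar w x)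
      (∫ x, g x * ((x ^ 2 / v ^ 2 - 1 / v) / 2 * gaussDensityVar v x)) v := by
  have ha : 0 < v / 2 := by positivity
  have hbound : ∀ᵐ x, ∀ w ∈ Icc (v / 2) (2 * v),
      ‖g x * ((x ^ 2 / w ^ 2 - 1 / w) / 2 * gaussDensityVar w x)‖ ≤
        |g x| * ((x ^ 2 / (v / 2) ^ 2 + 1 / (v / 2)) *
          (√(2 * v / (v / 2)) * gaussDensityVar (2 * v) x)) :=
    Eventually.of_forall fun x w hw => by
      rw [norm_mul, norm_eq_abs, norm_eq_abs]
      gcongr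
      exact abs_variance_deriv_gaussDensityVar_le ha hw x
  have hbound_int := (hg.abs.integrable_mul_mul_gaussDensityVar hgm.norm
    (polyGrowth_sq_div_sq_add_one_div (v / 2)) (by fun_prop) (by positivity : 0 < 2 * v)).const_mul
    √(2 * v / (v / 2))
  refine (hasDerivAt_integral_of_dominated_loc_of_deriv_le
    (Icc_mem_nhds (by linarith) (by linarith))
    (Eventually.of_forall fun w => hgm.mul (continuous_gaussDensityVar w).aestronglyMeasurable)
    (hg.integrable_mul_gaussDensityVar hgm hv) (hgm.mul (by fun_prop)) hbound
    (hbound_int.congr (Eventually.of_forall fun x => by ring))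
    (Eventually.of_forall fun x w hw =>
      (hasDerivAt_gaussDensityVar_variance x (ha.trans_le hw.1)).const_mul (g x))).2

lemma integral_mul_neg_div_mul_gaussDensityVar (hg : ∀ x, HasDerivAt g (g' x) x)
    (hgp : PolyGrowth g) (hg'p : PolyGrowth g') (hg'm : AEStronglyMeasurable g') (hv : 0 < v) :
    ∫ x, g x * (-(x / v) * gaussDensityVar v x) = -∫ x, g' x * gaussDensityVar v x := by
  have hgm : AEStronglyMeasurable g :=
    (Differentiable.continuous fun x => (hg x).differentiableAt).aestronglyMeasurable
  exact integral_mul_deriv_eq_deriv_mul_of_integrable (fun x _ => hg x)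
    (fun x _ => hasDerivAt_gaussDensityVar v x)
    (hgp.integrable_mul_mul_gaussDensityVar hgm (polyGrowth_neg_div v) (by fun_prop) hv)
    (hg'p.integrable_mul_gaussDensityVar hg'm hv) (hgp.integrable_mul_gaussDensityVar hgm hv)

lemma integral_mul_sq_div_sq_sub_one_div_mul_gaussDensityVar (hg : ∀ x, HasDerivAt g (g' x) x)
    (hgp : PolyGrowth g) (hg'p : PolyGrowth g') (hg'm : AEStronglyMeasurable g') (hv : 0 < v) :
    ∫ x, g x * ((x ^ 2 / v ^ 2 - 1 / v) * gaussDensityVar v x) =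
      -∫ x, g' x * (-(x / v) * gaussDensityVar v x) := by
  have hgm : AEStronglyMeasurable g :=
    (Differentiable.continuous fun x => (hg x).differentiableAt).aestronglyMeasurable
  exact integral_mul_deriv_eq_deriv_mul_of_integrable (fun x _ => hg x)
    (fun x _ => hasDerivAt_neg_div_mul_gaussDensityVar v x)
    (hgp.integrable_mul_mul_gaussDensityVar hgm (polyGrowth_sq_div_sq_sub_one_div v)
      (by fun_prop) hv)
    (hg'p.integrable_mul_mul_gaussDensityVar hg'm (polyGrowth_neg_div v) (by fun_prop) hv)
    (hgp.integrable_mul_mul_gaussDensityVar hgm (polyGrowth_neg_div v) (by fun_prop) hv)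

end Integrals

/-- Price's theorem (1D): the derivative with respect to the variance `v` of the
expectation of `f` under `N(0, v)` is half the expectation of `f''`. -/
theorem price_1d (f : ℝ → ℝ) (hf : ContDiff ℝ 2 f)
    (hfp : PolyGrowth f) (hf'p : PolyGrowth (deriv f))
    (hf''p : PolyGrowth (deriv (deriv f)))
    (v : ℝ) (hv : 0 < v) :
    HasDerivAt (fun w => ∫ x, f x * gaussDensityVar w x)
      ((1 / 2) * ∫ x, deriv (deriv f) x * gaussDensityVar v x) v := by
  have hf' : ContDiff ℝ 1 (deriv f) := hf.deriv' (n := 1)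
  have hf_deriv x : HasDerivAt f (deriv f x) x := (hf.differentiable (by norm_num) x).hasDerivAt
  have hf'_deriv x : HasDerivAt (deriv f) (deriv (deriv f) x) x :=
    (hf.differentiable_deriv_two x).hasDerivAt
  convert hfp.hasDerivAt_integral_mul_gaussDensityVar hf.continuous.aestronglyMeasurable hv using 1
  calc (1 / 2) * ∫ x, deriv (deriv f) x * gaussDensityVar v x
      = (1 / 2) * ∫ x, f x * ((x ^ 2 / v ^ 2 - 1 / v) * gaussDensityVar v x) := by
        rw [integral_mul_sq_div_sq_sub_one_div_mul_gaussDensityVar hf_deriv hfp hf'p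
            hf'.continuous.aestronglyMeasurable hv,
          integral_mul_neg_div_mul_gaussDensityVar hf'_deriv hf'p hf''p
            hf'.continuous_deriv_one.aestronglyMeasurable hv, neg_neg]
    _ = ∫ x, f x * ((x ^ 2 / v ^ 2 - 1 / v) / 2 * gaussDensityVar v x) := by
        rw [← integral_const_mul]
        congr 1 with x
        ring
end

section
/- Square-root factorization of rank-one corrected covariance: Let D be diagonal with positive entries, u ∈ ℝᵏ with u ≠ 0, η = 1/(uᵀ D⁻¹ u + 1), and R = D^{-1/2} - [(1 - √η)/(uᵀ D⁻¹ u)] D⁻¹ u uᵀ D^{-1/2}. Then R Rᵀ = D⁻¹ - η D⁻¹ u uᵀ D⁻¹ = (D + u uᵀ)⁻¹. -/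
/-!
With `P = D⁻¹ = S²` for the symmetric square root `S = D^{-1/2}` and `V = u uᵀ`, the identity
`V P V = (uᵀ P u) V` collapses `(S - c P V S)(S - c P V S)ᵀ` to `P - (2c - c² uᵀPu) P V P`.
The coefficient `c = (1 - √η)/s` with `s = uᵀ D⁻¹ u` is the root of `2c - c² s = η` that makes
this the Sherman–Morrison formula `(D + V)⁻¹ = D⁻¹ - (s + 1)⁻¹ D⁻¹ V D⁻¹`.
-/

open Matrix

namespace Matrix

variable {n α : Type*} [Fintype n]

theorem vecMulVec_mul_mul_vecMulVec [CommSemiring α] (u v w x : n → α) (M : Matrix n n α) :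
    vecMulVec u v * M * vecMulVec w x = (v ⬝ᵥ M *ᵥ w) • vecMulVec u x := by
  rw [vecMulVec_mul, vecMulVec_mul_vecMulVec, vecMulVec_smul, dotProduct_mulVec]

theorem inv_add_vecMulVec [DecidableEq n] [Field α] {A : Matrix n n α} (hA : IsUnit A)
    (u v : n → α) (h : v ⬝ᵥ A⁻¹ *ᵥ u + 1 ≠ 0) :
    (A + vecMulVec u v)⁻¹ =
      A⁻¹ - (v ⬝ᵥ A⁻¹ *ᵥ u + 1)⁻¹ • (A⁻¹ * vecMulVec u v * A⁻¹) := by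
  have hAA : A * A⁻¹ = 1 := mul_nonsing_inv A ((isUnit_iff_isUnit_det A).mp hA)
  refine inv_eq_right_inv ?_
  set s := v ⬝ᵥ A⁻¹ *ᵥ u
  have hVAV : vecMulVec u v * (A⁻¹ * vecMulVec u v * A⁻¹) = s • (vecMulVec u v * A⁻¹) := by
    rw [← Matrix.mul_assoc, ← Matrix.mul_assoc, vecMulVec_mul_mul_vecMulVec, Matrix.smul_mul]
  have hAV : A * (A⁻¹ * vecMulVec u v * A⁻¹) = vecMulVec u v * A⁻¹ := by
    rw [← Matrix.mul_assoc, ← Matrix.mul_assoc, hAA, Matrix.one_mul]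
  rw [add_mul, mul_sub, mul_sub, Matrix.mul_smul, Matrix.mul_smul, hAA, hAV, hVAV]
  linear_combination (norm := module) -(inv_mul_cancel₀ h) • (vecMulVec u v * A⁻¹)

theorem sub_smul_mul_vecMulVec_mul_mul_transpose [CommRing α] {S P : Matrix n n α}
    (hS : Sᵀ = S) (hP : S * S = P) (u : n → α) (c : α) :
    (S - c • (P * vecMulVec u u * S)) * (S - c • (P * vecMulVec u u * S))ᵀ =
      P - (2 * c - c ^ 2 * (u ⬝ᵥ P *ᵥ u)) • (P * vecMulVec u u * P) := by
  have hPS : P * vecMulVec u u * S * S = P * vecMulVec u u * P := by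
    rw [Matrix.mul_assoc, hP]
  have hSP : S * (S * vecMulVec u u * P) = P * vecMulVec u u * P := by
    rw [← Matrix.mul_assoc, ← Matrix.mul_assoc, hP]
  have hT : (P * vecMulVec u u * S)ᵀ = S * vecMulVec u u * P := by
    rw [← hP, transpose_mul, transpose_mul, transpose_mul, hS, transpose_vecMulVec,
      Matrix.mul_assoc]
  have hVPV : P * vecMulVec u u * S * (S * vecMulVec u u * P) =
      (u ⬝ᵥ P *ᵥ u) • (P * vecMulVec u u * P) := by
    rw [show P * vecMulVec u u * S * (S * vecMulVec u u * P) =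
        P * (vecMulVec u u * P * vecMulVec u u) * P by
      simp only [← hP, Matrix.mul_assoc], vecMulVec_mul_mul_vecMulVec, Matrix.mul_smul,
      Matrix.smul_mul]
  rw [transpose_sub, transpose_smul, hS, hT, sub_mul, mul_sub, mul_sub, Matrix.mul_smul,
    Matrix.smul_mul, Matrix.smul_mul, Matrix.mul_smul, hP, hPS, hSP, hVPV]
  module

theorem diagonal_one_div_sqrt_mul_self [DecidableEq n] {d : n → ℝ} (hd : ∀ i, 0 < d i) :
    diagonal (fun i => 1 / √(d i)) * diagonal (fun i => 1 / √(d i)) = (diagonal d)⁻¹ := by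
  refine (inv_eq_right_inv ?_).symm
  rw [diagonal_mul_diagonal, diagonal_mul_diagonal, ← diagonal_one]
  congr 1
  ext i
  rw [div_mul_div_comm, one_mul, Real.mul_self_sqrt (hd i).le, mul_one_div_cancel (hd i).ne']

end Matrix

theorem two_mul_sub_sq_mul_eq_one_div_add_one {s : ℝ} (hs : 0 < s) :
    2 * ((1 - √(1 / (s + 1))) / s) - ((1 - √(1 / (s + 1))) / s) ^ 2 * s = 1 / (s + 1) := by
  have hsq : √(1 / (s + 1)) ^ 2 * (s + 1) = 1 := by
    rw [Real.sq_sqrt (by positivity)]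
    field_simp
  field_simp
  linear_combination -hsq

/-- Square-root factorization of the rank-one corrected covariance:
with `D = diag d` (`d > 0`), `u ≠ 0`, `η = 1/(uᵀ D⁻¹ u + 1)` and
`R = D^{-1/2} - [(1 - √η)/(uᵀ D⁻¹ u)] D⁻¹ u uᵀ D^{-1/2}`, one has
`R Rᵀ = D⁻¹ - η D⁻¹ u uᵀ D⁻¹ = (D + u uᵀ)⁻¹`. -/
theorem rank_one_sqrt_factorization {k : ℕ} (d : Fin k → ℝ)
    (hd : ∀ i, 0 < d i) (u : Fin k → ℝ) (hu : u ≠ 0) :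
    let D : Matrix (Fin k) (Fin k) ℝ := Matrix.diagonal d
    let Dhalf : Matrix (Fin k) (Fin k) ℝ :=
      Matrix.diagonal (fun i => 1 / Real.sqrt (d i))
    let η : ℝ := 1 / (dotProduct u (D⁻¹.mulVec u) + 1)
    let R : Matrix (Fin k) (Fin k) ℝ :=
      Dhalf - ((1 - Real.sqrt η) / dotProduct u (D⁻¹.mulVec u)) •
        (D⁻¹ * vecMulVec u u * Dhalf)
    R * Rᵀ = D⁻¹ - η • (D⁻¹ * vecMulVec u u * D⁻¹) ∧
      R * Rᵀ = (D + vecMulVec u u)⁻¹ := by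
  intro D Dhalf η R
  have hD : D.PosDef := posDef_diagonal_iff.mpr hd
  have hs : 0 < u ⬝ᵥ D⁻¹ *ᵥ u := by
    simpa only [star_trivial] using hD.inv.dotProduct_mulVec_pos hu
  have hRR : R * Rᵀ = D⁻¹ - η • (D⁻¹ * vecMulVec u u * D⁻¹) := by
    rw [sub_smul_mul_vecMulVec_mul_mul_transpose (diagonal_transpose _)
      (diagonal_one_div_sqrt_mul_self hd), two_mul_sub_sq_mul_eq_one_div_add_one hs]
  refine ⟨hRR, ?_⟩
  rw [hRR, inv_add_vecMulVec hD.isUnit u u (by positivity), ← one_div (_ + 1 : ℝ)]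
end

section
/- Variance of the REINFORCE mean-gradient estimator for a quadratic: Let ξ ∼ N(μ, σ²) and f(ξ) = c ξ²/2. Then Var[((ξ - μ)/σ²)(f(ξ) - E[f(ξ)])] = 2 c² μ² + (5/2) c² σ². -/
/-! With `Y = ξ - μ` the estimator is `c / (2σ²) · (Y³ + 2μY² - σ²Y)`, so its mean and variance
are linear combinations of central Gaussian moments. These are `E[Y^(2k+1)] = 0` and
`E[Y^(2k)] = σ^(2k) (2k-1)‼`, by Stein's identity `E[Y^(n+2)] = (n+1) σ² E[Y^n]`: integrate by
parts against the density, whose derivative is `-(x - μ)/σ²` times itself. -/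

open MeasureTheory ProbabilityTheory
open scoped NNReal Nat

namespace ProbabilityTheory

lemma hasDerivAt_gaussianPDFReal (μ : ℝ) (v : ℝ≥0) (x : ℝ) :
    HasDerivAt (gaussianPDFReal μ v) (-((x - μ) / v) * gaussianPDFReal μ v x) x := by
  have h : HasDerivAt (fun x => -(x - μ) ^ 2 / (2 * v)) (-(2 * (x - μ)) / (2 * v)) x := by
    simpa using (((hasDerivAt_id x).sub_const μ).pow 2).neg.div_const (2 * (v : ℝ))
  refine (h.exp.const_mul (√(2 * Real.pi * v))⁻¹).congr_deriv ?_
  rw [gaussianPDFReal, neg_div, neg_div, mul_div_mul_left _ _ two_ne_zero]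
  ring

lemma integrable_sub_pow_gaussianReal (μ : ℝ) (v : ℝ≥0) (n : ℕ) :
    Integrable (fun x => (x - μ) ^ n) (gaussianReal μ v) := by
  refine (integrable_norm_iff (by fun_prop)).1 ?_
  simpa [norm_pow] using ((memLp_id_gaussianReal n).sub (memLp_const μ)).integrable_norm_pow'

lemma integrable_gaussianPDFReal_mul_sub_pow (μ : ℝ) (v : ℝ≥0) (n : ℕ) :
    Integrable fun x => gaussianPDFReal μ v x * (x - μ) ^ n := by
  rcases eq_or_ne v 0 with rfl | hv
  · simp
  have h := integrable_sub_pow_gaussianReal μ v n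
  rw [gaussianReal_of_var_ne_zero μ hv, integrable_withDensity_iff_integrable_smul'
    (measurable_gaussianPDF μ v) (.of_forall fun _ => gaussianPDF_lt_top)] at h
  simpa using h

lemma integral_sub_pow_add_two_gaussianReal (μ : ℝ) (v : ℝ≥0) (n : ℕ) :
    ∫ x, (x - μ) ^ (n + 2) ∂gaussianReal μ v
      = (n + 1) * v * ∫ x, (x - μ) ^ n ∂gaussianReal μ v := by
  rcases eq_or_ne v 0 with rfl | hv
  · simp
  simp only [integral_gaussianReal_eq_integral_smul hv, smul_eq_mul]
  have hderiv (x : ℝ) : HasDerivAt (fun x => (x - μ) ^ (n + 1) * gaussianPDFReal μ v x)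
      ((n + 1) * (gaussianPDFReal μ v x * (x - μ) ^ n)
        - (v : ℝ)⁻¹ * (gaussianPDFReal μ v x * (x - μ) ^ (n + 2))) x := by
    have hpow : HasDerivAt (fun x => (x - μ) ^ (n + 1)) ((n + 1) * (x - μ) ^ n) x := by
      simpa using (hasDerivAt_pow (n + 1) (x - μ)).comp_sub_const x μ
    refine (hpow.mul (hasDerivAt_gaussianPDFReal μ v x)).congr_deriv ?_
    field_simp
    ring
  have hint (k : ℕ) := integrable_gaussianPDFReal_mul_sub_pow μ v k
  have h := integral_eq_zero_of_hasDerivAt_of_integrable hderiv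
    (((hint n).const_mul _).sub ((hint (n + 2)).const_mul _))
    ((hint (n + 1)).congr (.of_forall fun x => mul_comm _ _))
  rw [integral_sub ((hint n).const_mul _) ((hint (n + 2)).const_mul _), integral_const_mul,
    integral_const_mul, sub_eq_zero] at h
  have hv' : (v : ℝ) ≠ 0 := by exact_mod_cast hv
  field_simp at h
  rw [← h]
  ring

lemma integral_sub_pow_odd_gaussianReal (μ : ℝ) (v : ℝ≥0) (k : ℕ) :
    ∫ x, (x - μ) ^ (2 * k + 1) ∂gaussianReal μ v = 0 := by
  induction k with
  | zero =>
    have hid : Integrable (fun x : ℝ => x) (gaussianReal μ v) :=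
      (memLp_id_gaussianReal 1).integrable le_rfl
    simp [integral_sub hid (integrable_const μ), integral_id_gaussianReal]
  | succ k ih =>
    rw [show 2 * (k + 1) + 1 = 2 * k + 1 + 2 by ring, integral_sub_pow_add_two_gaussianReal, ih,
      mul_zero]

-- At `k = 0` the subtraction `2 * k - 1` truncates to `0`, and `0‼ = 1` is the correct value.
lemma integral_sub_pow_even_gaussianReal (μ : ℝ) (v : ℝ≥0) (k : ℕ) :
    ∫ x, (x - μ) ^ (2 * k) ∂gaussianReal μ v = v ^ k * (2 * k - 1)‼ := by
  induction k with
  | zero => simp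
  | succ k ih =>
    rw [show 2 * (k + 1) = 2 * k + 2 by ring, integral_sub_pow_add_two_gaussianReal, ih,
      show 2 * k + 2 - 1 = 2 * k + 1 by omega, Nat.doubleFactorial_add_one]
    push_cast
    ring

lemma integral_sub_pow_gaussianReal (μ : ℝ) (v : ℝ≥0) (n : ℕ) :
    ∫ x, (x - μ) ^ n ∂gaussianReal μ v = if Even n then (v : ℝ) ^ (n / 2) * (n - 1)‼ else 0 := by
  obtain ⟨k, rfl | rfl⟩ := Nat.even_or_odd' n
  · simp [integral_sub_pow_even_gaussianReal]
  · simp [integral_sub_pow_odd_gaussianReal, Nat.not_even_bit1]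

lemma integral_gaussianReal_of_eq_sum_mul_sub_pow {μ : ℝ} {v : ℝ≥0} {n : ℕ} {f : ℝ → ℝ}
    (a : Fin n → ℝ) (hf : ∀ x, f x = ∑ i, a i * (x - μ) ^ (i : ℕ)) :
    ∫ x, f x ∂gaussianReal μ v
      = ∑ i, a i * if Even (i : ℕ) then (v : ℝ) ^ ((i : ℕ) / 2) * ((i : ℕ) - 1)‼ else 0 := by
  rw [funext hf, integral_finsetSum _ fun (i : Fin n) _ =>
    (integrable_sub_pow_gaussianReal μ v i).const_mul (a i)]
  simp only [integral_const_mul, integral_sub_pow_gaussianReal]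

end ProbabilityTheory

/-- Variance of the REINFORCE mean-gradient estimator for `f(ξ) = c ξ²/2`
under `ξ ∼ N(μ, σ²)`:
`Var[((ξ - μ)/σ²)(f(ξ) - E[f(ξ)])] = 2 c² μ² + (5/2) c² σ²`. -/
theorem reinforce_mean_estimator_variance (μ σ c : ℝ) (hσ : 0 < σ) :
    variance
      (fun x => ((x - μ) / σ ^ 2) *
        (c * x ^ 2 / 2 -
          ∫ y, c * y ^ 2 / 2 ∂(gaussianReal μ ⟨σ ^ 2, sq_nonneg σ⟩)))
      (gaussianReal μ ⟨σ ^ 2, sq_nonneg σ⟩) =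
      2 * c ^ 2 * μ ^ 2 + (5 / 2) * c ^ 2 * σ ^ 2 := by
  set v : ℝ≥0 := ⟨σ ^ 2, sq_nonneg σ⟩
  have hv : (v : ℝ) = σ ^ 2 := rfl
  have hσ2 : σ ^ 2 ≠ 0 := by positivity
  have hf : ∫ y, c * y ^ 2 / 2 ∂gaussianReal μ v = c * (μ ^ 2 + σ ^ 2) / 2 := by
    rw [integral_gaussianReal_of_eq_sum_mul_sub_pow ![c * μ ^ 2 / 2, c * μ, c / 2]
      fun x => by simp [Fin.sum_univ_three]; ring]
    simp [Fin.sum_univ_three, hv, Nat.even_iff]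
    ring
  have hg : ∫ x, (x - μ) / σ ^ 2 * (c * x ^ 2 / 2 - c * (μ ^ 2 + σ ^ 2) / 2) ∂gaussianReal μ v
      = c * μ := by
    rw [integral_gaussianReal_of_eq_sum_mul_sub_pow ![0, -c / 2, c * μ / σ ^ 2, c / (2 * σ ^ 2)]
      fun x => by simp [Fin.sum_univ_four]; field_simp; ring]
    simp [Fin.sum_univ_four, hv, Nat.even_iff]
    field_simp
  rw [hf, variance_eq_integral (by fun_prop), hg]
  -- `(c / (2σ²))² (Y³ + 2μY² - σ²Y - 2σ²μ)²` expanded in powers of `Y = x - μ`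
  rw [integral_gaussianReal_of_eq_sum_mul_sub_pow (fun i => c ^ 2 / (4 * σ ^ 4) *
      ![4 * σ ^ 4 * μ ^ 2, 4 * σ ^ 4 * μ, σ ^ 4 - 8 * σ ^ 2 * μ ^ 2, -8 * σ ^ 2 * μ,
        4 * μ ^ 2 - 2 * σ ^ 2, 4 * μ, 1] i)
    fun x => by simp [Fin.sum_univ_seven]; field_simp; ring]
  simp [Fin.sum_univ_seven, hv, Nat.even_iff, Nat.doubleFactorial]
  field_simp
  ring
end

section
/- Variance of the scale-gradient estimator for a quadratic: Let ξ ∼ N(μ, σ²), f(ξ) = c ξ²/2, and consider the estimator ((ξ - μ)/σ) f'(ξ) for the gradient with respect to σ. Then Var[((ξ - μ)/σ) c ξ] = 2 c² σ² + μ² c². -/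
open MeasureTheory ProbabilityTheory Real
open scoped NNReal

/-!
Reparameterising `ξ = μ + σ z` with `z ∼ N(0, 1)` turns the estimator into the quadratic
`c σ z² + c μ z`, and `Var[a z² + b z] = 2 a² + b²` follows from the standard normal moments
`E z = E z³ = 0` (symmetry), `E z² = 1` and `E z⁴ = 3`; the even moments come from
`∫ x^(2k) e^(-b x²) dx = b^(-(k + 1/2)) Γ(k + 1/2)`.
-/

lemma integral_pow_gaussianReal_of_odd {n : ℕ} (hn : Odd n) (v : ℝ≥0) :
    ∫ x, x ^ n ∂gaussianReal 0 v = 0 := by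
  have h := integral_map_equiv (MeasurableEquiv.neg ℝ) (fun x : ℝ => x ^ n)
    (μ := gaussianReal 0 v)
  simp only [MeasurableEquiv.neg_apply, hn.neg_pow, integral_neg] at h
  rw [gaussianReal_map_neg, neg_zero] at h
  linarith

lemma integrable_pow_gaussianReal (μ : ℝ) (v : ℝ≥0) (n : ℕ) :
    Integrable (fun x => x ^ n) (gaussianReal μ v) :=
  ((memLp_id_gaussianReal n).integrable_norm_pow').mono' (by fun_prop)
    (ae_of_all _ fun x => by simp [norm_pow])

lemma gaussianReal_eq_map_const_add_mul (μ σ : ℝ) :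
    gaussianReal μ ⟨σ ^ 2, sq_nonneg σ⟩ = (gaussianReal 0 1).map (fun z => μ + σ * z) := by
  have : (fun z : ℝ => μ + σ * z) = (μ + ·) ∘ (σ * ·) := rfl
  rw [this, ← Measure.map_map (by fun_prop) (by fun_prop), gaussianReal_map_const_mul,
    gaussianReal_map_const_add, mul_zero, zero_add, mul_one]
  rfl

lemma integral_pow_two_mul_mul_exp_neg_mul_sq {b : ℝ} (hb : 0 < b) (k : ℕ) :
    ∫ x, x ^ (2 * k) * rexp (-b * x ^ 2) = b ^ (-(k + 1 / 2 : ℝ)) * Gamma (k + 1 / 2) := by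
  have h_even : ∫ x, x ^ (2 * k) * rexp (-b * x ^ 2)
      = 2 * ∫ x in Set.Ioi 0, x ^ (2 * k) * rexp (-b * x ^ 2) := by
    rw [← integral_comp_abs (f := fun x => x ^ (2 * k) * rexp (-b * x ^ 2))]
    simp only [pow_mul, sq_abs]
  have h_rpow : ∫ x in Set.Ioi 0, x ^ (2 * k) * rexp (-b * x ^ 2)
      = ∫ x in Set.Ioi 0, x ^ ((2 * k : ℕ) : ℝ) * rexp (-b * x ^ ((2 : ℕ) : ℝ)) := by
    simp only [Real.rpow_natCast]
  rw [h_even, h_rpow, integral_rpow_mul_exp_neg_mul_rpow (by norm_num)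
    (neg_one_lt_zero.trans_le (by positivity)) hb]
  have : ((2 * k : ℕ) + 1 : ℝ) / ((2 : ℕ) : ℝ) = k + 1 / 2 := by push_cast; ring
  rw [neg_div, this]
  ring

lemma integral_pow_two_mul_gaussianReal_zero_one (k : ℕ) :
    ∫ x, x ^ (2 * k) ∂gaussianReal 0 1 = 2 ^ k * Gamma (k + 1 / 2) / √π := by
  have h_pdf (x : ℝ) : gaussianPDFReal 0 1 x = (√2 * √π)⁻¹ * rexp (-(1 / 2) * x ^ 2) := by
    rw [gaussianPDFReal, NNReal.coe_one, mul_one, sub_zero, Real.sqrt_mul zero_le_two]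
    ring_nf
  have h_half : (1 / 2 : ℝ) ^ (-(k + 1 / 2 : ℝ)) = 2 ^ k * √2 := by
    rw [one_div, Real.inv_rpow zero_le_two, ← Real.rpow_neg zero_le_two, neg_neg,
      Real.rpow_add two_pos, Real.rpow_natCast, Real.sqrt_eq_rpow, one_div]
  calc ∫ x, x ^ (2 * k) ∂gaussianReal 0 1
      = ∫ x, (√2 * √π)⁻¹ * (x ^ (2 * k) * rexp (-(1 / 2) * x ^ 2)) := by
        rw [integral_gaussianReal_eq_integral_smul one_ne_zero]
        congr with x
        rw [smul_eq_mul, h_pdf]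
        ring
    _ = 2 ^ k * Gamma (k + 1 / 2) / √π := by
        rw [integral_const_mul, integral_pow_two_mul_mul_exp_neg_mul_sq (by norm_num), h_half]
        field_simp

lemma integral_sq_gaussianReal_zero_one : ∫ x, x ^ 2 ∂gaussianReal 0 1 = 1 := by
  have h := integral_pow_two_mul_gaussianReal_zero_one 1
  rw [Nat.cast_one, add_comm, Gamma_add_one one_half_pos.ne', Gamma_one_half_eq] at h
  rw [h]
  field_simp

lemma integral_pow_four_gaussianReal_zero_one : ∫ x, x ^ 4 ∂gaussianReal 0 1 = 3 := by
  have h := integral_pow_two_mul_gaussianReal_zero_one 2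
  rw [show ((2 : ℕ) : ℝ) + 1 / 2 = 1 / 2 + 1 + 1 by norm_num, Gamma_add_one (by norm_num),
    Gamma_add_one one_half_pos.ne', Gamma_one_half_eq] at h
  rw [h]
  field_simp
  norm_num

lemma variance_quadratic_gaussianReal_zero_one (a b : ℝ) :
    Var[fun z => a * z ^ 2 + b * z; gaussianReal 0 1] = 2 * a ^ 2 + b ^ 2 := by
  have h_pow := integrable_pow_gaussianReal 0 1
  have h_pow_id : Integrable (fun z : ℝ => z) (gaussianReal 0 1) := by simpa using h_pow 1
  have h_expand (z : ℝ) :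
      (a * z ^ 2 + b * z) ^ 2 = a ^ 2 * z ^ 4 + (2 * a * b * z ^ 3 + b ^ 2 * z ^ 2) := by ring
  have h_mem : MemLp (fun z : ℝ => a * z ^ 2 + b * z) 2 (gaussianReal 0 1) := by
    rw [memLp_two_iff_integrable_sq (by fun_prop)]
    simp only [h_expand]
    exact ((h_pow 4).const_mul _).fun_add
      (((h_pow 3).const_mul _).fun_add ((h_pow 2).const_mul _))
  have h_mean : ∫ z, a * z ^ 2 + b * z ∂gaussianReal 0 1 = a := by
    rw [integral_add ((h_pow 2).const_mul a) (h_pow_id.const_mul b), integral_const_mul,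
      integral_const_mul, integral_sq_gaussianReal_zero_one, integral_id_gaussianReal]
    ring
  have h_second : ∫ z, (a * z ^ 2 + b * z) ^ 2 ∂gaussianReal 0 1 = 3 * a ^ 2 + b ^ 2 := by
    simp only [h_expand]
    rw [integral_add ((h_pow 4).const_mul _)
        (((h_pow 3).const_mul _).fun_add ((h_pow 2).const_mul _)),
      integral_add ((h_pow 3).const_mul _) ((h_pow 2).const_mul _), integral_const_mul,
      integral_const_mul, integral_const_mul, integral_pow_four_gaussianReal_zero_one,
      integral_pow_gaussianReal_of_odd (by decide), integral_sq_gaussianReal_zero_one]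
    ring
  rw [variance_eq_sub h_mem]
  simp only [Pi.pow_apply]
  rw [h_second, h_mean]
  ring

/-- Variance of the pathwise scale-gradient estimator for `f(ξ) = c ξ²/2`
under `ξ ∼ N(μ, σ²)`: `Var[((ξ - μ)/σ) c ξ] = 2 c² σ² + μ² c²`. -/
theorem scale_gradient_estimator_variance (μ σ c : ℝ) (hσ : 0 < σ) :
    variance (fun x => ((x - μ) / σ) * (c * x))
        (gaussianReal μ ⟨σ ^ 2, sq_nonneg σ⟩) =
      2 * c ^ 2 * σ ^ 2 + μ ^ 2 * c ^ 2 := by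
  have h_reparam : (fun x => ((x - μ) / σ) * (c * x)) ∘ (fun z => μ + σ * z)
      = fun z => c * σ * z ^ 2 + c * μ * z := by
    ext z
    simp only [Function.comp_apply]
    field_simp
    ring
  rw [gaussianReal_eq_map_const_add_mul, variance_map (by fun_prop) (by fun_prop), h_reparam,
    variance_quadratic_gaussianReal_zero_one]
  ring
end
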